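/- For the map Φ(z₁,z₂) = (-(2z₁z₂ - z₁ - z₂)/(2 - z₁ - z₂), z₂), if (z₁,z₂) lies in the closed bidisk with z₁ ≠ 1 and z₂ ≠ 1, then Φⁿ(z₁,z₂) → (z₂, z₂) as n → ∞. -/

import Mathlib

open Filter Topology

/-! In the coordinate `w = (1 - z)⁻¹` the first component of `Φ` becomes the averaging map
`w₁ ↦ (w₁ + w₂) / 2`, while the closed unit disk minus `1` becomes the half-plane `1/2 ≤ re w`,
which keeps every denominator away from zero. So `w₁` converges geometrically to `w₂`. -/

lemma half_le_re_inv_one_sub {z : ℂ} (hz : ‖z‖ ≤ 1) (hz1 : z ≠ 1) : 1 / 2 ≤ ((1 - z)⁻¹).re := by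
  have hpos : 0 < Complex.normSq (1 - z) := Complex.normSq_pos.mpr (sub_ne_zero.mpr hz1.symm)
  have hsq : z.re ^ 2 + z.im ^ 2 ≤ 1 := by
    rw [← Complex.normSq_add_mul_I z.re z.im, Complex.re_add_im, Complex.normSq_eq_norm_sq]
    nlinarith [norm_nonneg z]
  rw [Complex.inv_re, le_div_iff₀ hpos, Complex.normSq_apply]
  simp only [Complex.sub_re, Complex.one_re, Complex.sub_im, Complex.one_im]
  nlinarith

lemma ne_zero_of_half_le_re {u : ℂ} (hu : 1 / 2 ≤ u.re) : u ≠ 0 := by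
  rintro rfl
  norm_num at hu

lemma neg_div_one_sub_inv_eq_one_sub_inv_half_add {u c : ℂ} (hu : u ≠ 0) (hc : c ≠ 0)
    (huc : u + c ≠ 0) :
    -(2 * (1 - u⁻¹) * (1 - c⁻¹) - (1 - u⁻¹) - (1 - c⁻¹)) / (2 - (1 - u⁻¹) - (1 - c⁻¹))
      = 1 - ((u + c) / 2)⁻¹ := by
  have : (2 : ℂ) - (1 - u⁻¹) - (1 - c⁻¹) = (u + c) / (u * c) := by field_simp; ring
  rw [this]
  field_simp
  ring

noncomputable def averagingSeq (u c : ℂ) (n : ℕ) : ℂ := c + (u - c) * 2⁻¹ ^ n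

lemma averagingSeq_succ (u c : ℂ) (n : ℕ) :
    averagingSeq u c (n + 1) = (averagingSeq u c n + c) / 2 := by
  simp only [averagingSeq, pow_succ]
  ring

lemma half_le_re_averagingSeq {u c : ℂ} (hu : 1 / 2 ≤ u.re) (hc : 1 / 2 ≤ c.re) (n : ℕ) :
    1 / 2 ≤ (averagingSeq u c n).re := by
  induction n with
  | zero => simpa [averagingSeq] using hu
  | succ n ih =>
    rw [averagingSeq_succ, Complex.div_ofNat_re, Complex.add_re]
    linarith

lemma tendsto_averagingSeq (u c : ℂ) : Tendsto (averagingSeq u c) atTop (𝓝 c) := by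
  have h : Tendsto (fun n : ℕ => (2⁻¹ : ℂ) ^ n) atTop (𝓝 0) :=
    tendsto_pow_atTop_nhds_zero_of_norm_lt_one (by norm_num)
  have := (tendsto_const_nhds (x := c)).add (h.const_mul (u - c))
  rwa [mul_zero, add_zero] at this

lemma iterate_one_sub_inv (Φ : ℂ × ℂ → ℂ × ℂ)
    (hΦ : ∀ z : ℂ × ℂ, Φ z = (-(2*z.1*z.2 - z.1 - z.2)/(2 - z.1 - z.2), z.2))
    {u c : ℂ} (hu : 1 / 2 ≤ u.re) (hc : 1 / 2 ≤ c.re) (n : ℕ) :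
    Φ^[n] (1 - u⁻¹, 1 - c⁻¹) = (1 - (averagingSeq u c n)⁻¹, 1 - c⁻¹) := by
  induction n with
  | zero => simp [averagingSeq]
  | succ n ih =>
    have hn := half_le_re_averagingSeq hu hc n
    have hsum : averagingSeq u c n + c ≠ 0 :=
      ne_zero_of_half_le_re (by rw [Complex.add_re]; linarith)
    rw [Function.iterate_succ_apply', ih, hΦ, averagingSeq_succ,
      neg_div_one_sub_inv_eq_one_sub_inv_half_add (ne_zero_of_half_le_re hn)
        (ne_zero_of_half_le_re hc) hsum]

/-- For `Φ(z₁,z₂) = (-(2z₁z₂ - z₁ - z₂)/(2 - z₁ - z₂), z₂)`, if `(z₁,z₂)` lies in the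
closed bidisk with `z₁ ≠ 1` and `z₂ ≠ 1`, then `Φⁿ(z₁,z₂) → (z₂,z₂)` as `n → ∞`. -/
theorem stmt1 (Φ : ℂ × ℂ → ℂ × ℂ)
    (hΦ : ∀ z : ℂ × ℂ, Φ z = (-(2*z.1*z.2 - z.1 - z.2)/(2 - z.1 - z.2), z.2))
    (z₁ z₂ : ℂ) (h1 : ‖z₁‖ ≤ 1) (h2 : ‖z₂‖ ≤ 1)
    (hne1 : z₁ ≠ 1) (hne2 : z₂ ≠ 1) :
    Tendsto (fun n : ℕ => Φ^[n] (z₁, z₂)) atTop (𝓝 (z₂, z₂)) := by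
  obtain ⟨u, hu, rfl⟩ : ∃ u : ℂ, 1 / 2 ≤ u.re ∧ z₁ = 1 - u⁻¹ :=
    ⟨_, half_le_re_inv_one_sub h1 hne1, by rw [inv_inv]; ring⟩
  obtain ⟨c, hc, rfl⟩ : ∃ c : ℂ, 1 / 2 ≤ c.re ∧ z₂ = 1 - c⁻¹ :=
    ⟨_, half_le_re_inv_one_sub h2 hne2, by rw [inv_inv]; ring⟩
  simp_rw [iterate_one_sub_inv Φ hΦ hu hc]
  have hfst := (tendsto_averagingSeq u c).inv₀ (ne_zero_of_half_le_re hc)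
  exact (tendsto_const_nhds.sub hfst).prodMk_nhds tendsto_const_nhds
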